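/- Let J be a B(H)-ideal and 𝒮 ⊆ J a set whose cardinality is strictly less than the cardinality of the continuum. Then J(𝒮)J = (𝒮)_J if and only if (𝒮)J = (𝒮), where J(𝒮)J is the set of finite sums Σ A_iX_iB_i with A_i, B_i ∈ J and X_i ∈ (𝒮). -/

import Mathlib

open Pointwise

variable {H : Type*} [NormedAddCommGroup H] [InnerProductSpace ℂ H] [CompleteSpace H]
  [TopologicalSpace.SeparableSpace H]

/-- A `B(H)`-ideal: a two-sided ideal of the algebra `B(H)` of bounded operators on `H`. -/
def IsBHIdeal (J : Set (H →L[ℂ] H)) : Prop :=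
  0 ∈ J ∧ (∀ x ∈ J, ∀ y ∈ J, x + y ∈ J) ∧
    (∀ (A : H →L[ℂ] H), ∀ x ∈ J, A * x ∈ J) ∧
    (∀ (A : H →L[ℂ] H), ∀ x ∈ J, x * A ∈ J)

/-- `I` is a `J`-ideal (a subideal): a `ℂ`-linear subspace of `B(H)` contained in `J` that is
closed under left and right multiplication by elements of `J`. -/
def IsSubideal (J I : Set (H →L[ℂ] H)) : Prop :=
  I ⊆ J ∧ 0 ∈ I ∧ (∀ x ∈ I, ∀ y ∈ I, x + y ∈ I) ∧
    (∀ (c : ℂ), ∀ x ∈ I, c • x ∈ I) ∧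
    (∀ A ∈ J, ∀ x ∈ I, A * x ∈ I ∧ x * A ∈ I)

/-- `(𝒮)_J`, the smallest `J`-ideal containing the set `𝒮`. -/
def subidealGen (J 𝒮 : Set (H →L[ℂ] H)) : Set (H →L[ℂ] H) :=
  ⋂₀ {I | IsSubideal J I ∧ 𝒮 ⊆ I}

/-- `(𝒮)`, the smallest `B(H)`-ideal containing the set `𝒮`. -/
def idealGen (𝒮 : Set (H →L[ℂ] H)) : Set (H →L[ℂ] H) :=
  ⋂₀ {I | IsBHIdeal I ∧ 𝒮 ⊆ I}

/-- The product `IJ` of two ideals: the set of finite sums `Σ Xᵢ Yᵢ` with `Xᵢ ∈ I`, `Yᵢ ∈ J`. -/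
def idealProd (I J : Set (H →L[ℂ] H)) : Set (H →L[ℂ] H) :=
  {T | ∃ (n : ℕ) (X Y : Fin n → (H →L[ℂ] H)),
    (∀ i, X i ∈ I) ∧ (∀ i, Y i ∈ J) ∧ T = ∑ i, X i * Y i}

/-- `J(𝒮)J`: the set of finite sums `Σ Aᵢ Xᵢ Bᵢ` with `Aᵢ, Bᵢ ∈ J` and `Xᵢ ∈ (𝒮)`. -/
def JSJ (J 𝒮 : Set (H →L[ℂ] H)) : Set (H →L[ℂ] H) :=
  {T | ∃ (n : ℕ) (A X B : Fin n → (H →L[ℂ] H)),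
    (∀ i, A i ∈ J) ∧ (∀ i, B i ∈ J) ∧ (∀ i, X i ∈ idealGen 𝒮) ∧
    T = ∑ i, A i * X i * B i}

/-- `U_J(H)`: the unitaries of the form `1 + A` with `A ∈ J`. -/
def unitaryJ (J : Set (H →L[ℂ] H)) : Set (H →L[ℂ] H) :=
  {U | U ∈ unitary (H →L[ℂ] H) ∧ U - 1 ∈ J}

/-!
Every `B(H)`-ideal is self-adjoint, since `T⋆ = W T W` with `W` the adjoint of the partial
isometry in the polar decomposition of `T`. Hence softness `(𝒮)J = (𝒮)` gives `J(𝒮) = (𝒮)`, so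
`𝒮 ⊆ (𝒮) = J(𝒮)J`; and `J(𝒮)J` is a `J`-ideal contained in every `J`-ideal containing `𝒮`, so it
is `(𝒮)_J`. Conversely, if `J(𝒮)J = (𝒮)_J` then `𝒮 ⊆ J(𝒮)J ⊆ (𝒮)J`, and `(𝒮)J` is a
`B(H)`-ideal contained in `(𝒮)`, so `(𝒮)J = (𝒮)`.
-/

section PolarDecomposition

variable {E : Type*} [NormedAddCommGroup E] [InnerProductSpace ℂ E] [CompleteSpace E]

open ContinuousLinearMap

theorem ContinuousLinearMap.norm_cfcAbs_apply (T : E →L[ℂ] E) (x : E) :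
    ‖CFC.abs T x‖ = ‖T x‖ := by
  have h : adjoint (CFC.abs T) ∘L CFC.abs T = adjoint T ∘L T := by
    rw [← star_eq_adjoint, ← star_eq_adjoint, (CFC.abs_nonneg T).isSelfAdjoint.star_eq]
    exact CFC.abs_mul_abs T
  refine (sq_eq_sq₀ (norm_nonneg _) (norm_nonneg _)).mp ?_
  rw [apply_norm_sq_eq_inner_adjoint_right, h, ← apply_norm_sq_eq_inner_adjoint_right]

/-- `W` is the adjoint of the partial isometry of the polar decomposition of `T`: it sends `T x`
to `|T| x` on the closure of the range of `T` and vanishes on its orthogonal complement. -/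
theorem ContinuousLinearMap.exists_mul_eq_cfcAbs_and_star_eq_cfcAbs_mul (T : E →L[ℂ] E) :
    ∃ W : E →L[ℂ] E, W * T = CFC.abs T ∧ star T = CFC.abs T * W := by
  set M := T.range.topologicalClosure
  let e : E →ₗ[ℂ] M := (T : E →ₗ[ℂ] E).codRestrict M fun x =>
    T.range.le_topologicalClosure (LinearMap.mem_range_self _ x)
  have he : DenseRange e := by
    rw [DenseRange, Subtype.dense_iff, ← Set.range_comp]
    exact (Submodule.topologicalClosure_coe _).subset
  set V := ((CFC.abs T : E →L[ℂ] E) : E →ₗ[ℂ] E).extendOfNorm e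
  have hV : ∀ x, V (e x) = CFC.abs T x :=
    LinearMap.extendOfNorm_eq he ⟨1, fun x => by simp [e, T.norm_cfcAbs_apply]⟩
  set W := V ∘L M.orthogonalProjectionOnto
  have hW_mem : ∀ m : M, W m = V m := by simp [W]
  have hW_orth : ∀ z ∈ Mᗮ, W z = 0 := fun z hz => by
    simp [W, Submodule.orthogonalProjectionOnto_apply_of_mem_orthogonal hz]
  have hstar_orth : ∀ z ∈ Mᗮ, star T z = 0 := fun z hz => by
    rwa [Submodule.orthogonal_closure, orthogonal_range, ← star_eq_adjoint] at hz
  have hstar_mem : ∀ m : M, star T m = CFC.abs T (V m) := fun m =>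
    he.induction_on m (isClosed_eq (by fun_prop) (by fun_prop)) fun x => by
      rw [hV]
      exact congr($(CFC.abs_mul_abs T) x).symm
  refine ⟨W, ext fun x => (hW_mem (e x)).trans (hV x), ext fun y => ?_⟩
  obtain ⟨m, hm, z, hz, rfl⟩ := M.exists_add_mem_mem_orthogonal y
  simp [hstar_orth z hz, hW_orth z hz, hstar_mem ⟨m, hm⟩, hW_mem ⟨m, hm⟩]

theorem ContinuousLinearMap.exists_star_eq_mul_mul (T : E →L[ℂ] E) :
    ∃ W : E →L[ℂ] E, star T = W * T * W := by
  obtain ⟨W, hWT, hstar⟩ := T.exists_mul_eq_cfcAbs_and_star_eq_cfcAbs_mul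
  exact ⟨W, by rw [hstar, ← hWT]⟩

end PolarDecomposition

theorem Fin.append_mem {α : Type*} {s : Set α} {n m : ℕ} {f : Fin n → α} {g : Fin m → α}
    (hf : ∀ i, f i ∈ s) (hg : ∀ i, g i ∈ s) (i : Fin (n + m)) : Fin.append f g i ∈ s :=
  Fin.addCases (by simpa using hf) (by simpa using hg) i

section OperatorIdeals

variable {E : Type*} [NormedAddCommGroup E] [InnerProductSpace ℂ E]

namespace IsBHIdeal

variable {J : Set (E →L[ℂ] E)} {x y : E →L[ℂ] E}

theorem zero_mem (hJ : IsBHIdeal J) : (0 : E →L[ℂ] E) ∈ J := hJ.1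

theorem add_mem (hJ : IsBHIdeal J) (hx : x ∈ J) (hy : y ∈ J) : x + y ∈ J := hJ.2.1 x hx y hy

theorem mul_mem_left (hJ : IsBHIdeal J) (A : E →L[ℂ] E) (hx : x ∈ J) : A * x ∈ J :=
  hJ.2.2.1 A x hx

theorem mul_mem_right (hJ : IsBHIdeal J) (A : E →L[ℂ] E) (hx : x ∈ J) : x * A ∈ J :=
  hJ.2.2.2 A x hx

theorem sum_mem (hJ : IsBHIdeal J) {ι : Type*} (s : Finset ι) {f : ι → E →L[ℂ] E}
    (hf : ∀ i ∈ s, f i ∈ J) : ∑ i ∈ s, f i ∈ J :=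
  Finset.sum_induction f (· ∈ J) (fun _ _ => hJ.add_mem) hJ.zero_mem hf

theorem star_mem [CompleteSpace E] (hJ : IsBHIdeal J) (hx : x ∈ J) : star x ∈ J := by
  obtain ⟨W, hW⟩ := x.exists_star_eq_mul_mul
  rw [hW]
  exact hJ.mul_mem_right W (hJ.mul_mem_left W hx)

end IsBHIdeal

theorem isBHIdeal_idealGen (𝒮 : Set (E →L[ℂ] E)) : IsBHIdeal (idealGen 𝒮) :=
  ⟨fun _ hI => hI.1.zero_mem,
    fun _ hx _ hy I hI => hI.1.add_mem (hx I hI) (hy I hI),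
    fun A _ hx I hI => hI.1.mul_mem_left A (hx I hI),
    fun A _ hx I hI => hI.1.mul_mem_right A (hx I hI)⟩

theorem subset_idealGen (𝒮 : Set (E →L[ℂ] E)) : 𝒮 ⊆ idealGen 𝒮 :=
  fun _ hx _ hI => hI.2 hx

theorem idealGen_subset {𝒮 I : Set (E →L[ℂ] E)} (hI : IsBHIdeal I) (h : 𝒮 ⊆ I) :
    idealGen 𝒮 ⊆ I :=
  Set.sInter_subset_of_mem ⟨hI, h⟩

theorem subset_subidealGen (J 𝒮 : Set (E →L[ℂ] E)) : 𝒮 ⊆ subidealGen J 𝒮 :=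
  fun _ hx _ hK => hK.2 hx

theorem subidealGen_subset {J 𝒮 K : Set (E →L[ℂ] E)} (hK : IsSubideal J K) (h : 𝒮 ⊆ K) :
    subidealGen J 𝒮 ⊆ K :=
  Set.sInter_subset_of_mem ⟨hK, h⟩

section idealProd

variable {I J : Set (E →L[ℂ] E)}

theorem mul_mem_idealProd {X Y : E →L[ℂ] E} (hX : X ∈ I) (hY : Y ∈ J) :
    X * Y ∈ idealProd I J :=
  ⟨1, fun _ => X, fun _ => Y, fun _ => hX, fun _ => hY, by simp⟩

theorem zero_mem_idealProd : (0 : E →L[ℂ] E) ∈ idealProd I J :=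
  ⟨0, Fin.elim0, Fin.elim0, (·.elim0), (·.elim0), by simp⟩

theorem add_mem_idealProd {x y : E →L[ℂ] E} (hx : x ∈ idealProd I J) (hy : y ∈ idealProd I J) :
    x + y ∈ idealProd I J := by
  obtain ⟨n, X, Y, hX, hY, rfl⟩ := hx
  obtain ⟨m, X', Y', hX', hY', rfl⟩ := hy
  exact ⟨n + m, Fin.append X X', Fin.append Y Y', Fin.append_mem hX hX',
    Fin.append_mem hY hY', by simp [Fin.sum_univ_add]⟩

theorem sum_mem_idealProd {ι : Type*} (s : Finset ι) {f : ι → E →L[ℂ] E}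
    (hf : ∀ i ∈ s, f i ∈ idealProd I J) : ∑ i ∈ s, f i ∈ idealProd I J :=
  Finset.sum_induction f _ (fun _ _ => add_mem_idealProd) zero_mem_idealProd hf

theorem isBHIdeal_idealProd (hI : IsBHIdeal I) (hJ : IsBHIdeal J) :
    IsBHIdeal (idealProd I J) := by
  refine ⟨zero_mem_idealProd, fun _ hx _ hy => add_mem_idealProd hx hy, ?_, ?_⟩
  · rintro A _ ⟨n, X, Y, hX, hY, rfl⟩
    rw [Finset.mul_sum]
    refine sum_mem_idealProd _ fun i _ => ?_
    rw [← mul_assoc]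
    exact mul_mem_idealProd (hI.mul_mem_left A (hX i)) (hY i)
  · rintro A _ ⟨n, X, Y, hX, hY, rfl⟩
    rw [Finset.sum_mul]
    refine sum_mem_idealProd _ fun i _ => ?_
    rw [mul_assoc]
    exact mul_mem_idealProd (hX i) (hJ.mul_mem_right A (hY i))

theorem idealProd_subset_left (hI : IsBHIdeal I) : idealProd I J ⊆ I := by
  rintro _ ⟨n, X, Y, hX, -, rfl⟩
  exact hI.sum_mem _ fun i _ => hI.mul_mem_right (Y i) (hX i)

theorem idealProd_subset_right (hJ : IsBHIdeal J) : idealProd I J ⊆ J := by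
  rintro _ ⟨n, X, Y, -, hY, rfl⟩
  exact hJ.sum_mem _ fun i _ => hJ.mul_mem_left (X i) (hY i)

variable [CompleteSpace E]

theorem star_mem_idealProd (hI : IsBHIdeal I) (hJ : IsBHIdeal J) {T : E →L[ℂ] E}
    (hT : T ∈ idealProd I J) : star T ∈ idealProd J I := by
  obtain ⟨n, X, Y, hX, hY, rfl⟩ := hT
  rw [star_sum]
  refine sum_mem_idealProd _ fun i _ => ?_
  rw [star_mul]
  exact mul_mem_idealProd (hJ.star_mem (hY i)) (hI.star_mem (hX i))

theorem idealProd_swap_eq_of_eq (hI : IsBHIdeal I) (hJ : IsBHIdeal J)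
    (h : idealProd I J = I) : idealProd J I = I := by
  refine (idealProd_subset_right hI).antisymm fun T hT => ?_
  have hT' : star T ∈ idealProd I J := by rw [h]; exact hI.star_mem hT
  simpa using star_mem_idealProd hI hJ hT'

end idealProd

section JSJ

variable {J 𝒮 : Set (E →L[ℂ] E)}

theorem mul_mul_mem_JSJ {A X B : E →L[ℂ] E} (hA : A ∈ J) (hX : X ∈ idealGen 𝒮) (hB : B ∈ J) :
    A * X * B ∈ JSJ J 𝒮 :=
  ⟨1, fun _ => A, fun _ => X, fun _ => B, fun _ => hA, fun _ => hB, fun _ => hX, by simp⟩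

theorem zero_mem_JSJ : (0 : E →L[ℂ] E) ∈ JSJ J 𝒮 :=
  ⟨0, Fin.elim0, Fin.elim0, Fin.elim0, (·.elim0), (·.elim0), (·.elim0), by simp⟩

theorem add_mem_JSJ {x y : E →L[ℂ] E} (hx : x ∈ JSJ J 𝒮) (hy : y ∈ JSJ J 𝒮) :
    x + y ∈ JSJ J 𝒮 := by
  obtain ⟨n, A, X, B, hA, hB, hX, rfl⟩ := hx
  obtain ⟨m, A', X', B', hA', hB', hX', rfl⟩ := hy
  exact ⟨n + m, Fin.append A A', Fin.append X X', Fin.append B B', Fin.append_mem hA hA',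
    Fin.append_mem hB hB', Fin.append_mem hX hX', by simp [Fin.sum_univ_add]⟩

theorem sum_mem_JSJ {ι : Type*} (s : Finset ι) {f : ι → E →L[ℂ] E}
    (hf : ∀ i ∈ s, f i ∈ JSJ J 𝒮) : ∑ i ∈ s, f i ∈ JSJ J 𝒮 :=
  Finset.sum_induction f _ (fun _ _ => add_mem_JSJ) zero_mem_JSJ hf

theorem mul_mem_JSJ_left (hJ : IsBHIdeal J) (C : E →L[ℂ] E) {T : E →L[ℂ] E} (hT : T ∈ JSJ J 𝒮) :
    C * T ∈ JSJ J 𝒮 := by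
  obtain ⟨n, A, X, B, hA, hB, hX, rfl⟩ := hT
  rw [Finset.mul_sum]
  refine sum_mem_JSJ _ fun i _ => ?_
  rw [← mul_assoc, ← mul_assoc]
  exact mul_mul_mem_JSJ (hJ.mul_mem_left C (hA i)) (hX i) (hB i)

theorem mul_mem_JSJ_right (hJ : IsBHIdeal J) (C : E →L[ℂ] E) {T : E →L[ℂ] E} (hT : T ∈ JSJ J 𝒮) :
    T * C ∈ JSJ J 𝒮 := by
  obtain ⟨n, A, X, B, hA, hB, hX, rfl⟩ := hT
  rw [Finset.sum_mul]
  refine sum_mem_JSJ _ fun i _ => ?_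
  rw [mul_assoc]
  exact mul_mul_mem_JSJ (hA i) (hX i) (hJ.mul_mem_right C (hB i))

theorem isSubideal_JSJ (hJ : IsBHIdeal J) : IsSubideal J (JSJ J 𝒮) := by
  refine ⟨?_, zero_mem_JSJ, fun _ hx _ hy => add_mem_JSJ hx hy,
    fun c _ hx => ?_, fun C _ _ hx => ⟨mul_mem_JSJ_left hJ C hx, mul_mem_JSJ_right hJ C hx⟩⟩
  · rintro _ ⟨n, A, X, B, hA, -, -, rfl⟩
    exact hJ.sum_mem _ fun i _ => hJ.mul_mem_right _ (hJ.mul_mem_right _ (hA i))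
  · simpa using mul_mem_JSJ_left hJ (c • 1) hx

theorem JSJ_subset_of_isSubideal (hJ : IsBHIdeal J) {K : Set (E →L[ℂ] E)}
    (hK : IsSubideal J K) (h𝒮 : 𝒮 ⊆ K) : JSJ J 𝒮 ⊆ K := by
  obtain ⟨-, hK_zero, hK_add, -, hK_mul⟩ := hK
  have hgen : idealGen 𝒮 ⊆ {X | ∀ A ∈ J, ∀ B ∈ J, A * X * B ∈ K} := by
    refine idealGen_subset ⟨fun A _ B _ => ?_, fun X hX Y hY A hA B hB => ?_,
      fun C X hX A hA B hB => ?_, fun C X hX A hA B hB => ?_⟩ fun S hS A hA B hB => ?_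
    · simpa using hK_zero
    · simpa only [mul_add, add_mul] using hK_add _ (hX A hA B hB) _ (hY A hA B hB)
    · simpa only [mul_assoc] using hX _ (hJ.mul_mem_right C hA) B hB
    · simpa only [mul_assoc] using hX A hA _ (hJ.mul_mem_left C hB)
    · exact (hK_mul B hB _ (hK_mul A hA S (h𝒮 hS)).1).2
  rintro _ ⟨n, A, X, B, hA, hB, hX, rfl⟩
  exact Finset.sum_induction _ (· ∈ K) (fun x y hx hy => hK_add x hx y hy) hK_zero
    fun i _ => hgen (hX i) _ (hA i) _ (hB i)

theorem JSJ_subset_subidealGen (hJ : IsBHIdeal J) : JSJ J 𝒮 ⊆ subidealGen J 𝒮 :=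
  Set.subset_sInter fun _ hK => JSJ_subset_of_isSubideal hJ hK.1 hK.2

theorem JSJ_subset_idealProd : JSJ J 𝒮 ⊆ idealProd (idealGen 𝒮) J := by
  rintro _ ⟨n, A, X, B, -, hB, hX, rfl⟩
  exact sum_mem_idealProd _ fun i _ =>
    mul_mem_idealProd ((isBHIdeal_idealGen 𝒮).mul_mem_left (A i) (hX i)) (hB i)

theorem idealProd_idealProd_subset_JSJ : idealProd (idealProd J (idealGen 𝒮)) J ⊆ JSJ J 𝒮 := by
  rintro _ ⟨n, X, B, hX, hB, rfl⟩
  refine sum_mem_JSJ _ fun i _ => ?_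
  obtain ⟨m, A, Z, hA, hZ, hXi⟩ := hX i
  rw [hXi, Finset.sum_mul]
  exact sum_mem_JSJ _ fun k _ => mul_mul_mem_JSJ (hA k) (hZ k) (hB i)

end JSJ

end OperatorIdeals

theorem JSJ_eq_subidealGen_iff_soft_general (J 𝒮 : Set (H →L[ℂ] H)) (hJ : IsBHIdeal J) :
    JSJ J 𝒮 = subidealGen J 𝒮 ↔ idealProd (idealGen 𝒮) J = idealGen 𝒮 := by
  have hI := isBHIdeal_idealGen 𝒮
  constructor
  · intro h
    refine (idealProd_subset_left hI).antisymm (idealGen_subset (isBHIdeal_idealProd hI hJ) ?_)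
    calc 𝒮 ⊆ subidealGen J 𝒮 := subset_subidealGen J 𝒮
      _ = JSJ J 𝒮 := h.symm
      _ ⊆ idealProd (idealGen 𝒮) J := JSJ_subset_idealProd
  · intro h
    refine (JSJ_subset_subidealGen hJ).antisymm (subidealGen_subset (isSubideal_JSJ hJ) ?_)
    calc 𝒮 ⊆ idealGen 𝒮 := subset_idealGen 𝒮
      _ = idealProd (idealProd J (idealGen 𝒮)) J := by rw [idealProd_swap_eq_of_eq hI hJ h, h]
      _ ⊆ JSJ J 𝒮 := idealProd_idealProd_subset_JSJ

/-- for `|𝒮| < 𝔠`, `J(𝒮)J = (𝒮)_J` iff `(𝒮)` is `J`-soft. -/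
theorem JSJ_eq_subidealGen_iff_soft (J 𝒮 : Set (H →L[ℂ] H)) (hJ : IsBHIdeal J)
    (hinf : ¬FiniteDimensional ℂ H) (h𝒮 : 𝒮 ⊆ J)
    (hcard : Cardinal.mk 𝒮 < Cardinal.continuum) :
    JSJ J 𝒮 = subidealGen J 𝒮 ↔ idealProd (idealGen 𝒮) J = idealGen 𝒮 :=
  JSJ_eq_subidealGen_iff_soft_general J 𝒮 hJ
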